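/- Let S be a left cancellative monoid and R a ring with a finite S-grading of support size d. If R_e is nil, f-commutative, and finitely generated (by n elements with maximal nilpotency index s), then R is nilpotent with s ≤ nd(R) ≤ d((s−1)n + 1); if R_e = 0, then nd(R) ≤ d + 1. -/

import Mathlib

/-- Product `a * l₀ * l₁ * ⋯` of a nonempty list of ring elements. -/
def mulList {R : Type*} [Mul R] (a : R) (l : List R) : R := l.foldl (· * ·) a

/-- `pw a n` is `aⁿ` for `n ≥ 1` (junk value `0` at `n = 0`). -/
def pw {R : Type*} [Mul R] [Zero R] (a : R) : ℕ → R
  | 0 => 0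
  | 1 => a
  | n + 2 => pw a (n + 1) * a

/-- Product of `n` elements given by `f` (junk `0` when `n = 0`). -/
def finProd {R : Type*} [Mul R] [Zero R] : {n : ℕ} → (Fin n → R) → R
  | 0, _ => 0
  | n + 1, f => mulList (f 0) (List.ofFn fun i : Fin n => f i.succ)

/-- `R ^ n = 0`: every product of `n` elements of `R` vanishes. -/
def PowZero (R : Type*) [Mul R] [Zero R] (n : ℕ) : Prop :=
  ∀ (a : R) (l : List R), l.length + 1 = n → mulList a l = 0

/-- `T ^ n = 0` for a subset `T` of a ring. -/
def PowZeroOn {R : Type*} [Mul R] [Zero R] (T : Set R) (n : ℕ) : Prop :=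
  ∀ (a : R) (l : List R), a ∈ T → (∀ x ∈ l, x ∈ T) → l.length + 1 = n → mulList a l = 0

/-- `a` is nilpotent: `aⁿ = 0` for some `n ≥ 1`. -/
def IsNilE {R : Type*} [Mul R] [Zero R] (a : R) : Prop := ∃ n, 1 ≤ n ∧ pw a n = 0

/-- A nil ring: every element is nilpotent. -/
def IsNilRing (R : Type*) [Mul R] [Zero R] : Prop := ∀ a : R, IsNilE a

/-- An `S`-grading of the ring `R`: a direct sum decomposition into additive
subgroups with `R_g R_h ⊆ R_{gh}`. -/
structure IsGrading {S R : Type*} [Monoid S] [NonUnitalRing R] [DecidableEq S]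
    (A : S → AddSubgroup R) : Prop where
  mul_mem : ∀ {g h : S} {x y : R}, x ∈ A g → y ∈ A h → x * y ∈ A (g * h)
  isInternal : DirectSum.IsInternal A

/-- Grading by an additively written monoid. -/
structure IsAddGrading {S R : Type*} [AddMonoid S] [NonUnitalRing R] [DecidableEq S]
    (A : S → AddSubgroup R) : Prop where
  mul_mem : ∀ {g h : S} {x y : R}, x ∈ A g → y ∈ A h → x * y ∈ A (g + h)
  isInternal : DirectSum.IsInternal A

/-- The subset `T` of a ring is `f`-commutative: there are a semigroup `G` acting on it
from the left and a map `f` with `a*b = f(a,b)·(b*a)`. -/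
def IsFCommutativeOn {R : Type*} [Mul R] (T : Set R) : Prop :=
  ∃ (G : Type) (_ : Semigroup G) (act : G → R → R),
    (∀ l m : G, ∀ x : R, x ∈ T → act (l * m) x = act l (act m x)) ∧
    (∀ l : G, ∀ x : R, x ∈ T → act l x ∈ T) ∧
    (∀ l : G, ∀ x y : R, x ∈ T → y ∈ T → act l (x * y) = act l x * y) ∧
    ∃ f : R → R → G, ∀ a b : R, a ∈ T → b ∈ T → a * b = act (f a b) (b * a)

/-- The ring `R` is `f`-commutative. -/
def IsFCommutative (R : Type*) [Mul R] : Prop :=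
  ∃ (G : Type) (_ : Semigroup G) (act : G → R → R),
    (∀ l m : G, ∀ x : R, act (l * m) x = act l (act m x)) ∧
    (∀ l : G, ∀ x y : R, act l (x * y) = act l x * y) ∧
    ∃ f : R → R → G, ∀ a b : R, a * b = act (f a b) (b * a)

/-- The order of `g`: least `n ≥ 1` with `gⁿ = 1`, and `0` if no such `n` exists. -/
noncomputable def ordOf {S : Type*} [Monoid S] (g : S) : ℕ := sInf {n | 1 ≤ n ∧ g ^ n = 1}

/-!
Moving letters to the front only costs applications of the action, which fix `0`, so in the
`f`-commutative ring `R_e` a word in the generators vanishes as soon as some generator occurs `s`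
times. A product of `(s - 1) n + 1` monomials contains such a word by pigeonhole, and multilinearity
gives `R_e ^ ((s - 1) n + 1) = 0`.

For a product `x₁ ⋯ x_N` of homogeneous elements, look at the `N + 1` running degrees
`1, g₁, g₁ g₂, …`. A running product whose degree lies outside the support vanishes. Otherwise,
when `N ≥ d k`, some degree occurs `k + 1` times, and by left cancellation the `k` blocks between
consecutive occurrences lie in `R_e`, so their product vanishes if `R_e ^ k = 0`. When `R_e = 0`
the degree `1` is an extra value and `k = 1`, which gives `d + 1`.
-/

section ListProd

variable {R : Type*}

-- The value `0` on the empty list matches the convention `pw a 0 = 0`.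
def listProd [Mul R] [Zero R] : List R → R
  | [] => 0
  | a :: l => mulList a l

@[simp] lemma listProd_cons [Mul R] [Zero R] (a : R) (l : List R) :
    listProd (a :: l) = mulList a l := rfl

lemma mulList_cons [Mul R] (a x : R) (l : List R) : mulList a (x :: l) = mulList (a * x) l := rfl

lemma mulList_append [Mul R] (a : R) (l₁ l₂ : List R) :
    mulList a (l₁ ++ l₂) = mulList (mulList a l₁) l₂ :=
  List.foldl_append

lemma listProd_replicate [Mul R] [Zero R] (b : R) (m : ℕ) :
    listProd (List.replicate m b) = pw b m := by
  induction m with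
  | zero => rfl
  | succ m ih =>
    cases m with
    | zero => rfl
    | succ m =>
      have : listProd (List.replicate (m + 2) b) = listProd (List.replicate (m + 1) b) * b := by
        rw [List.replicate_succ', List.replicate_succ, List.cons_append, listProd_cons,
          mulList_append]
        rfl
      rw [this, ih]
      rfl

variable [SemigroupWithZero R]

lemma mul_mulList (a b : R) (l : List R) : mulList (a * b) l = a * mulList b l := by
  induction l generalizing b with
  | nil => rfl
  | cons x l ih => simpa [mulList, mul_assoc] using ih (b * x)

lemma listProd_append {l₁ l₂ : List R} (h₁ : l₁ ≠ []) (h₂ : l₂ ≠ []) :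
    listProd (l₁ ++ l₂) = listProd l₁ * listProd l₂ := by
  obtain ⟨a, l₁, rfl⟩ := List.exists_cons_of_ne_nil h₁
  obtain ⟨b, l₂, rfl⟩ := List.exists_cons_of_ne_nil h₂
  simp only [List.cons_append, listProd_cons, mulList_append]
  exact mul_mulList _ b l₂

lemma listProd_cons_of_ne_nil (a : R) {l : List R} (hl : l ≠ []) :
    listProd (a :: l) = a * listProd l :=
  listProd_append (l₁ := [a]) (List.cons_ne_nil _ _) hl

lemma listProd_append_singleton {l : List R} (hl : l ≠ []) (a : R) :
    listProd (l ++ [a]) = listProd l * a :=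
  listProd_append hl (List.cons_ne_nil _ _)

lemma listProd_flatten {M : List (List R)} (hM : ∀ m ∈ M, m ≠ []) :
    listProd M.flatten = listProd (M.map listProd) := by
  induction M with
  | nil => rfl
  | cons m M ih =>
    have hm : m ≠ [] := hM m (by simp)
    have ih := ih fun m' hm' => hM m' (by simp [hm'])
    rcases eq_or_ne M [] with rfl | hM'
    · simp [mulList]
    · have hflat : M.flatten ≠ [] := List.flatten_ne_nil_iff.2 ⟨_, M.head_mem hM', hM _ (by simp)⟩
      rw [List.flatten_cons, listProd_append hm hflat, ih, List.map_cons,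
        listProd_cons_of_ne_nil _ (by simpa using hM')]

lemma listProd_eq_zero_of_isInfix {l l' : List R} (h : l' <:+: l) (hne : l' ≠ [])
    (h0 : listProd l' = 0) : listProd l = 0 := by
  obtain ⟨u, v, rfl⟩ := h
  have hu : listProd (u ++ l') = 0 := by
    rcases eq_or_ne u [] with rfl | hu
    · simpa using h0
    · rw [listProd_append hu hne, h0, mul_zero]
  rcases eq_or_ne v [] with rfl | hv
  · simpa using hu
  · rw [listProd_append (by simp [hne]) hv, hu, zero_mul]

lemma listProd_mem {M : Type*} [SetLike M R] [MulMemClass M R] {T : M} {l : List R}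
    (hne : l ≠ []) (hl : ∀ x ∈ l, x ∈ T) : listProd l ∈ T := by
  induction l with
  | nil => exact absurd rfl hne
  | cons a l ih =>
    rcases eq_or_ne l [] with rfl | hl'
    · simpa [mulList] using hl a (by simp)
    · rw [listProd_cons_of_ne_nil a hl']
      exact mul_mem (hl a (by simp)) (ih hl' fun x hx => hl x (by simp [hx]))

lemma listProd_replicate_eq_zero {b : R} {s j : ℕ} (hs : 0 < s) (hb : pw b s = 0) (hj : s ≤ j) :
    listProd (List.replicate j b) = 0 := by
  refine listProd_eq_zero_of_isInfix (l' := List.replicate s b) (List.IsPrefix.isInfix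
    ⟨List.replicate (j - s) b, by rw [← List.replicate_add, Nat.add_sub_cancel' hj]⟩)
    (by simpa using hs.ne') (by rw [listProd_replicate, hb])

end ListProd

section PowZero

variable {R : Type*} [NonUnitalRing R]

lemma powZeroOn_iff {T : Set R} {N : ℕ} :
    PowZeroOn T N ↔ ∀ l : List R, (∀ x ∈ l, x ∈ T) → l.length = N → listProd l = 0 := by
  refine ⟨fun h l hl hN => ?_, fun h a l ha hl hN => h (a :: l) ?_ hN⟩
  · cases l with
    | nil => rfl
    | cons a l => exact h a l (hl a (by simp)) (fun x hx => hl x (by simp [hx])) hN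
  · simpa [or_imp, forall_and] using ⟨ha, hl⟩

lemma powZero_iff_powZeroOn_univ {N : ℕ} : PowZero R N ↔ PowZeroOn (Set.univ : Set R) N := by
  simp [PowZero, PowZeroOn]

lemma PowZeroOn.mono {T T' : Set R} {N : ℕ} (h : PowZeroOn T' N) (hT : T ⊆ T') :
    PowZeroOn T N :=
  fun a l ha hl hN => h a l (hT ha) (fun x hx => hT (hl x hx)) hN

lemma mulList_add (a b : R) (l : List R) : mulList (a + b) l = mulList a l + mulList b l := by
  induction l generalizing a b with
  | nil => rfl
  | cons x l ih => simpa [mulList, add_mul] using ih (a * x) (b * x)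

lemma listProd_append_cons_add (l₁ l₂ : List R) (y z : R) :
    listProd (l₁ ++ (y + z) :: l₂) = listProd (l₁ ++ y :: l₂) + listProd (l₁ ++ z :: l₂) := by
  cases l₁ with
  | nil => exact mulList_add y z l₂
  | cons x l₁ =>
    simp only [List.cons_append, listProd_cons, mulList_append, mulList_cons, mul_add, mulList_add]

theorem PowZeroOn.addSubgroupClosure {T : Set R} {N : ℕ} (h : PowZeroOn T N) :
    PowZeroOn (AddSubgroup.closure T : Set R) N := by
  rw [powZeroOn_iff] at h ⊢
  suffices ∀ l₂ l₁ : List R, (∀ x ∈ l₁, x ∈ T) → (∀ x ∈ l₂, x ∈ AddSubgroup.closure T) →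
      (l₁ ++ l₂).length = N → listProd (l₁ ++ l₂) = 0 from
    fun l hl hN => this l [] (by simp) hl hN
  intro l₂
  induction l₂ with
  | nil => simpa using h
  | cons y l₂ ih =>
    intro l₁ hl₁ hl₂ hN
    let φ : R →+ R := AddMonoidHom.mk' (fun z => listProd (l₁ ++ z :: l₂))
      (listProd_append_cons_add l₁ l₂)
    have hT : AddSubgroup.closure T ≤ φ.ker := by
      refine (AddSubgroup.closure_le _).2 fun z hz => ?_
      have := ih (l₁ ++ [z]) (by simpa [or_imp, forall_and] using ⟨hl₁, hz⟩)
        (fun x hx => hl₂ x (by simp [hx])) (by simpa using hN)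
      simpa [φ] using this
    exact hT (hl₂ y (by simp))

lemma PowZero.pw_eq_zero {N : ℕ} (h : PowZero R N) (b : R) : pw b N = 0 := by
  rw [← listProd_replicate]
  exact powZeroOn_iff.1 (powZero_iff_powZeroOn_univ.1 h) _ (by simp) (by simp)

end PowZero

lemma List.exists_lt_count_of_card_mul_lt_length {α : Type*} [DecidableEq α] {l : List α}
    {t : Finset α} (hl : ∀ x ∈ l, x ∈ t) {k : ℕ} (h : t.card * k < l.length) :
    ∃ x ∈ t, k < l.count x := by
  by_contra! hle
  have : ∑ x ∈ t, (l : Multiset α).count x ≤ t.card * k := by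
    simpa using Finset.sum_le_card_nsmul t _ k fun x hx => by simpa using hle x hx
  rw [Multiset.sum_count_eq_card (by simpa using hl)] at this
  simp only [Multiset.coe_card] at this
  omega

section FCommutative

variable {R : Type*} [NonUnitalRing R]

-- Each occurrence of `a i` can be moved to the front at the cost of an application of the action,
-- which fixes `0`.
theorem listProd_map_eq_zero_of_le_count {ι : Type*} [DecidableEq ι] {T : NonUnitalSubring R}
    (hfc : IsFCommutativeOn (T : Set R)) {a : ι → R} (ha : ∀ i, a i ∈ T) {i : ι} {s : ℕ}
    (hs : 0 < s) (hsa : pw (a i) s = 0) {w : List ι} (hw : s ≤ w.count i) :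
    listProd (w.map a) = 0 := by
  obtain ⟨G, _, act, -, -, hact, f, hf⟩ := hfc
  have hact0 (g : G) : act g 0 = 0 := by simpa using hact g 0 0 T.zero_mem T.zero_mem
  suffices ∀ j, s ≤ j + w.count i → listProd (List.replicate j (a i) ++ w.map a) = 0 by
    simpa using this 0 (by simpa using hw)
  clear hw
  induction w using List.reverseRecOn with
  | nil => exact fun j hj => by simpa using listProd_replicate_eq_zero hs hsa (by simpa using hj)
  | append_singleton w x ih =>
    intro j hj
    rw [List.map_append, List.map_singleton, ← List.append_assoc]
    set U := List.replicate j (a i) ++ w.map a with hU_def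
    rcases eq_or_ne U [] with hU | hU
    · obtain ⟨rfl, rfl⟩ : j = 0 ∧ w = [] := by simpa [hU_def] using hU
      obtain rfl : x = i := by
        by_contra hx
        simp [hx] at hj
        omega
      obtain rfl : s = 1 := by simp at hj; omega
      rw [hU]
      exact hsa
    have hUT : listProd U ∈ T :=
      listProd_mem hU fun y hy => by
        rcases List.mem_append.1 hy with hy | hy
        · rw [List.eq_of_mem_replicate hy]; exact ha i
        · obtain ⟨k, -, rfl⟩ := List.mem_map.1 hy; exact ha k
    rw [listProd_append_singleton hU]
    by_cases hx : x = i
    · subst hx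
      rw [hf _ _ hUT (ha x), ← listProd_cons_of_ne_nil _ hU, hU_def, ← List.cons_append,
        ← List.replicate_succ, ih (j + 1) (by simp [List.count_append] at hj; omega), hact0]
    · rw [ih j (by simpa [List.count_append, hx] using hj), zero_mul]

end FCommutative

section Monomials

variable {R : Type*} [NonUnitalRing R] {ι : Type*}

lemma mem_subsemigroupClosure_range_iff {a : ι → R} {x : R} :
    x ∈ Subsemigroup.closure (Set.range a) ↔ ∃ w : List ι, w ≠ [] ∧ listProd (w.map a) = x := by
  refine ⟨fun hx => ?_, fun ⟨w, hw, hx⟩ => hx ▸ listProd_mem (by simpa using hw) ?_⟩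
  · induction hx using Subsemigroup.closure_induction with
    | mem x hx =>
      obtain ⟨i, rfl⟩ := hx
      exact ⟨[i], by simp, rfl⟩
    | mul x y _ _ hx hy =>
      obtain ⟨w, hw, rfl⟩ := hx
      obtain ⟨w', hw', rfl⟩ := hy
      refine ⟨w ++ w', by simp [hw], ?_⟩
      rw [List.map_append, listProd_append (by simpa using hw) (by simpa using hw')]
  · simp only [List.mem_map]
    rintro _ ⟨i, -, rfl⟩
    exact Subsemigroup.subset_closure ⟨i, rfl⟩

lemma List.length_le_length_flatten {α : Type*} {M : List (List α)} (hM : ∀ m ∈ M, m ≠ []) :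
    M.length ≤ M.flatten.length := by
  rw [List.length_flatten]
  simpa using List.sum_le_sum (l := M) (f := fun _ => 1) (g := List.length)
    fun m hm => List.length_pos_iff.2 (hM m hm)

-- By pigeonhole, some letter occurs at least `s` times in the concatenated word.
theorem powZeroOn_subsemigroupClosure_range [Fintype ι] [DecidableEq ι] {T : NonUnitalSubring R}
    (hfc : IsFCommutativeOn (T : Set R)) {a : ι → R} (ha : ∀ i, a i ∈ T) {s : ℕ} (hs : 0 < s)
    (hsa : ∀ i, pw (a i) s = 0) :
    PowZeroOn (Subsemigroup.closure (Set.range a) : Set R) ((s - 1) * Fintype.card ι + 1) := by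
  rw [powZeroOn_iff]
  intro l hl hlen
  lift l to List (Subsemigroup.closure (Set.range a)) using hl
  choose word hne hword using fun y : Subsemigroup.closure (Set.range a) =>
    mem_subsemigroupClosure_range_iff.1 y.2
  have hM : ∀ m ∈ l.map word, m ≠ [] := by
    simp only [List.mem_map]
    rintro _ ⟨y, -, rfl⟩
    exact hne y
  have hprod : listProd (l.map Subtype.val) = listProd ((l.map word).flatten.map a) := by
    rw [List.map_flatten, listProd_flatten ?_, List.map_map, List.map_map]
    · exact congrArg listProd (List.map_congr_left fun y _ => (hword y).symm)
    · simp only [List.mem_map]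
      rintro _ ⟨_, ⟨y, -, rfl⟩, rfl⟩
      simpa using hne y
  have hlen' : Fintype.card ι * (s - 1) < (l.map word).flatten.length := by
    have := List.length_le_length_flatten hM
    simp only [List.length_map] at hlen this
    rw [mul_comm]
    omega
  obtain ⟨i, -, hi⟩ := List.exists_lt_count_of_card_mul_lt_length (by simp) hlen'
  rw [hprod]
  exact listProd_map_eq_zero_of_le_count hfc ha hs (hsa i) (by omega)

end Monomials

-- By left cancellation, two equal running products enclose a block of product `1`.
theorem List.exists_append_flatten_append_of_lt_count_scanl {α S : Type*} [Monoid S]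
    [IsLeftCancelMul S] [DecidableEq S] (φ : α → S) (l : List α) (b c : S) (j : ℕ)
    (h : j < ((l.map φ).scanl (· * ·) b).count c) :
    ∃ (l₀ : List α) (M : List (List α)) (l' : List α), l = l₀ ++ M.flatten ++ l' ∧
      b * (l₀.map φ).prod = c ∧ M.length = j ∧ ∀ m ∈ M, m ≠ [] ∧ (m.map φ).prod = 1 := by
  induction l generalizing b j with
  | nil =>
    obtain ⟨rfl, rfl⟩ : j = 0 ∧ b = c := by
      by_cases hb : b = c <;> simp_all
    exact ⟨[], [], [], rfl, mul_one b, rfl, by simp⟩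
  | cons x l ih =>
    rw [List.map_cons, List.scanl_cons, List.count_cons] at h
    by_cases hb : b = c
    · subst hb
      cases j with
      | zero => exact ⟨[], [], x :: l, rfl, mul_one b, rfl, by simp⟩
      | succ j =>
        obtain ⟨l₀, M, l', rfl, hc, hM, hblocks⟩ := ih (b * φ x) j (by simpa using h)
        refine ⟨[], (x :: l₀) :: M, l', by simp, mul_one b, by simp [hM], ?_⟩
        simp only [List.mem_cons, forall_eq_or_imp]
        refine ⟨⟨List.cons_ne_nil _ _, mul_left_cancel (a := b) ?_⟩, hblocks⟩
        rw [List.map_cons, List.prod_cons, ← mul_assoc, hc, mul_one]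
    · obtain ⟨l₀, M, l', rfl, hc, hM, hblocks⟩ := ih (b * φ x) j (by simpa [hb] using h)
      exact ⟨x :: l₀, M, l', rfl, by rw [List.map_cons, List.prod_cons, ← mul_assoc, hc], hM,
        hblocks⟩

lemma DirectSum.IsInternal.addSubgroupClosure_iUnion_eq_top {ι R : Type*} [DecidableEq ι]
    [AddCommGroup R] {A : ι → AddSubgroup R} (hA : DirectSum.IsInternal A) :
    AddSubgroup.closure (⋃ g, (A g : Set R)) = ⊤ := by
  have := DirectSum.IsInternal.addSubmonoid_iSup_eq_top (fun g => (A g).toAddSubmonoid) hA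
  rw [AddSubgroup.closure_iUnion]
  simp only [AddSubgroup.closure_eq]
  rw [eq_top_iff, ← AddSubgroup.toAddSubmonoid_le, AddSubgroup.top_toAddSubmonoid, ← this]
  exact iSup_le fun g => le_iSup (fun g => A g) g

section Graded

variable {S R : Type*} [Monoid S] [NonUnitalRing R] {A : S → AddSubgroup R}

lemma listProd_mem_of_forall_mem_deg
    (hmul : ∀ {g h : S} {x y : R}, x ∈ A g → y ∈ A h → x * y ∈ A (g * h)) {deg : R → S}
    {l : List R} (hne : l ≠ []) (hl : ∀ x ∈ l, x ∈ A (deg x)) :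
    listProd l ∈ A (l.map deg).prod := by
  induction l with
  | nil => exact absurd rfl hne
  | cons a l ih =>
    rcases eq_or_ne l [] with rfl | hl'
    · simpa [mulList] using hl a (by simp)
    · rw [listProd_cons_of_ne_nil a hl', List.map_cons, List.prod_cons]
      exact hmul (hl a (by simp)) (ih hl' fun x hx => hl x (by simp [hx]))

-- A running product whose degree lies outside `t` is already `0`; otherwise the `N + 1` running
-- degrees take some value `k + 1` times, and the `k` blocks in between lie in `A 1`.
theorem powZeroOn_iUnion_of_powZeroOn_one [IsLeftCancelMul S] [DecidableEq S]
    (hmul : ∀ {g h : S} {x y : R}, x ∈ A g → y ∈ A h → x * y ∈ A (g * h)) {k N : ℕ} (hk : 0 < k)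
    (hA1 : PowZeroOn (A 1 : Set R) k) (t : Finset S) (h1 : 1 ∈ t) (ht : ∀ g, A g ≠ ⊥ → g ∈ t)
    (hN : t.card * k < N + 1) : PowZeroOn (⋃ g, (A g : Set R)) N := by
  classical
  rw [powZeroOn_iff] at hA1 ⊢
  intro l hl hlen
  let deg : R → S := fun x => if h : ∃ g, x ∈ A g then h.choose else 1
  have hdeg : ∀ x ∈ l, x ∈ A (deg x) := fun x hx => by
    have h : ∃ g, x ∈ A g := Set.mem_iUnion.1 (hl x hx)
    simpa [deg, h] using h.choose_spec
  by_cases hP : ∀ c ∈ (l.map deg).scanl (· * ·) 1, c ∈ t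
  · obtain ⟨c, -, hc⟩ := List.exists_lt_count_of_card_mul_lt_length hP (by simpa [hlen] using hN)
    obtain ⟨l₀, M, l', rfl, -, hMlen, hM⟩ :=
      List.exists_append_flatten_append_of_lt_count_scanl deg l 1 c k hc
    refine listProd_eq_zero_of_isInfix ⟨l₀, l', rfl⟩ ?_ ?_
    · obtain ⟨m, M, rfl⟩ := List.exists_cons_of_length_pos (hMlen ▸ hk)
      simp [(hM m (by simp)).1]
    · rw [listProd_flatten fun m hm => (hM m hm).1]
      refine hA1 _ ?_ (by simpa using hMlen)
      simp only [List.mem_map]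
      rintro _ ⟨m, hm, rfl⟩
      rw [← (hM m hm).2]
      exact listProd_mem_of_forall_mem_deg hmul (hM m hm).1
        fun x hx => hdeg x <|
          List.mem_append_left _ (List.mem_append_right _ (List.mem_flatten_of_mem hm hx))
  · obtain ⟨c, hcP, hct⟩ := not_forall₂.1 hP
    obtain ⟨l₀, M, l', rfl, hc, -, -⟩ :=
      List.exists_append_flatten_append_of_lt_count_scanl deg l 1 c 0 (List.count_pos_iff.2 hcP)
    have hl₀ : l₀ ≠ [] := by
      rintro rfl
      exact hct (by simpa [← hc] using h1)
    refine listProd_eq_zero_of_isInfix (List.IsPrefix.isInfix ⟨M.flatten ++ l', by simp⟩) hl₀ ?_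
    have := listProd_mem_of_forall_mem_deg hmul hl₀ fun x hx => hdeg x (by simp [hx])
    rw [one_mul] at hc
    rwa [hc, not_ne_iff.1 (mt (ht c) hct), AddSubgroup.mem_bot] at this

theorem IsGrading.powZero_of_powZeroOn_one [IsLeftCancelMul S] [DecidableEq S] (hA : IsGrading A)
    {k N : ℕ} (hk : 0 < k) (hA1 : PowZeroOn (A 1 : Set R) k) (t : Finset S) (h1 : 1 ∈ t)
    (ht : ∀ g, A g ≠ ⊥ → g ∈ t) (hN : t.card * k < N + 1) : PowZero R N := by
  rw [powZero_iff_powZeroOn_univ, ← AddSubgroup.coe_top,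
    ← hA.isInternal.addSubgroupClosure_iUnion_eq_top]
  exact (powZeroOn_iUnion_of_powZeroOn_one hA.mul_mem hk hA1 t h1 ht hN).addSubgroupClosure

end Graded

theorem stmt_15_general {S R : Type*} [Monoid S] [IsLeftCancelMul S] [DecidableEq S]
    [NonUnitalRing R] (A : S → AddSubgroup R) (hA : IsGrading A)
    (d n s : ℕ) (hfin : {g : S | A g ≠ ⊥}.Finite) (hcard : hfin.toFinset.card = d)
    (hfc : IsFCommutativeOn (A 1 : Set R))
    (a : Fin n → R) (ha : ∀ i, a i ∈ A 1)
    (hgen : ∀ x ∈ A 1, x ∈ NonUnitalSubring.closure (Set.range a))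
    (hs : 1 ≤ s) (hsb : ∀ i, pw (a i) s = 0)
    (hsmin : 1 < s → ∃ i, pw (a i) (s - 1) ≠ 0) :
    (A 1 ≠ ⊥ →
      PowZero R (d * ((s - 1) * n + 1)) ∧ (1 < s → ¬ PowZero R (s - 1))) ∧
    (A 1 = ⊥ → PowZero R (d + 1)) := by
  let Re : NonUnitalSubring R :=
    { A 1 with mul_mem' := fun hx hy => by simpa using hA.mul_mem hx hy }
  have hRe : PowZeroOn (A 1 : Set R) ((s - 1) * n + 1) := by
    have := (powZeroOn_subsemigroupClosure_range (T := Re) hfc ha hs hsb).addSubgroupClosure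
    simpa using this.mono fun x hx => NonUnitalSubring.mem_closure_iff.1 (hgen x hx)
  have hsupp (g : S) (hg : A g ≠ ⊥) : g ∈ hfin.toFinset := hfin.mem_toFinset.2 hg
  refine ⟨fun hne => ⟨?_, fun hs1 h => ?_⟩, fun hbot => ?_⟩
  · exact hA.powZero_of_powZeroOn_one (by positivity) hRe _ (hsupp 1 hne) hsupp
      (by rw [hcard]; omega)
  · obtain ⟨i, hi⟩ := hsmin hs1
    exact hi (h.pw_eq_zero (a i))
  · refine hA.powZero_of_powZeroOn_one one_pos ?_ (insert 1 hfin.toFinset)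
      (Finset.mem_insert_self _ _) (fun g hg => Finset.mem_insert_of_mem (hsupp g hg)) ?_
    · intro x l hx _ hl
      obtain rfl : l = [] := List.length_eq_zero_iff.1 (by omega)
      exact (AddSubgroup.mem_bot.1 (hbot ▸ hx) : x = 0)
    · have := Finset.card_insert_le 1 hfin.toFinset
      omega

theorem stmt_15 {S R : Type*} [Monoid S] [IsLeftCancelMul S] [DecidableEq S]
    [NonUnitalRing R] (A : S → AddSubgroup R) (hA : IsGrading A)
    (d n s : ℕ) (hfin : {g : S | A g ≠ ⊥}.Finite) (hcard : hfin.toFinset.card = d)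
    (hnil : ∀ a ∈ A 1, IsNilE a) (hfc : IsFCommutativeOn (A 1 : Set R))
    (a : Fin n → R) (ha : ∀ i, a i ∈ A 1)
    (hgen : ∀ x ∈ A 1, x ∈ NonUnitalSubring.closure (Set.range a))
    (hs : 1 ≤ s) (hsb : ∀ i, pw (a i) s = 0)
    (hsmin : 1 < s → ∃ i, pw (a i) (s - 1) ≠ 0) :
    (A 1 ≠ ⊥ →
      PowZero R (d * ((s - 1) * n + 1)) ∧ (1 < s → ¬ PowZero R (s - 1))) ∧
    (A 1 = ⊥ → PowZero R (d + 1)) :=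
  stmt_15_general A hA d n s hfin hcard hfc a ha hgen hs hsb hsmin
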